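/- Let d ≥ 2 and g, h ∈ SL(d, ℝ). Suppose g = k_g D_g k_g' and h = k_h D_h k_h' are singular value decompositions, where the k's are orthogonal d × d matrices and D_g, D_h are diagonal with decreasing positive entries. Then σ₁(gh)/(σ₁(g) σ₁(h)) ≤ σ₂(g)/σ₁(g) + σ₂(h)/σ₁(h) + (σ₂(g)/σ₁(g)) · (σ₂(h)/σ₁(h)) + √(1 − ⟨k_g' k_h e₁, e_d⟩²). -/

import Mathlib

/-!
Write `g * h = k_g (D_g M D_h) k_h'` with `M = k_g' k_h` orthogonal; `σ₁(g h)` is at most the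
operator norm of `D_g M D_h`. Splitting each diagonal into its first entry and the rest expands
this into four terms. Three of them involve a second singular value, and the remaining corner
term is `σ₁(g) σ₁(h) M₁₁`. The first column of `M` is a unit vector, so
`|M₁₁| ≤ √(1 - M_{d1}²)`.
-/

open Matrix

/-- The list of singular values of a real square matrix, in decreasing order
(the square roots of the eigenvalues of `Aᴴ * A`). -/
noncomputable def svalList {n : Type*} [Fintype n] [DecidableEq n]
    (A : Matrix n n ℝ) : List ℝ :=
  (Multiset.sort
    (Finset.univ.val.map fun i =>
      Real.sqrt ((Matrix.isHermitian_conjTranspose_mul_self A).eigenvalues i)) (· ≤ ·)).reverse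

/-- `sval j A` is the `j`-th largest singular value `σⱼ(A)` of `A` (1-indexed). -/
noncomputable def sval {n : Type*} [Fintype n] [DecidableEq n]
    (j : ℕ) (A : Matrix n n ℝ) : ℝ :=
  (svalList A).getD (j - 1) 0

open scoped Matrix.Norms.L2Operator

lemma norm_add_mul_mul_add_le {R : Type*} [SeminormedRing R] (p r m q t : R) :
    ‖(p + r) * m * (q + t)‖ ≤
      ‖p * m * q‖ + ‖p‖ * ‖m‖ * ‖t‖ + ‖r‖ * ‖m‖ * ‖q‖ + ‖r‖ * ‖m‖ * ‖t‖ := by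
  have h (a b c : R) : ‖a * b * c‖ ≤ ‖a‖ * ‖b‖ * ‖c‖ := norm_mul₃_le
  rw [add_mul, add_mul, mul_add, mul_add, ← add_assoc]
  grw [norm_add₄_le, h p m t, h r m q, h r m t]

section

variable {n : Type*} [Fintype n] [DecidableEq n]

lemma mem_unitary_of_mul_transpose_eq_one {U : Matrix n n ℝ} (hU : U * Uᵀ = 1) :
    U ∈ unitary (Matrix n n ℝ) := by
  rwa [← mem_orthogonalGroup_iff] at hU

lemma sqrt_eigenvalues_conjTranspose_mul_self_le (A : Matrix n n ℝ) (i : n) :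
    √((isHermitian_conjTranspose_mul_self A).eigenvalues i) ≤ ‖A‖ := by
  have : Nonempty n := ⟨i⟩
  have hle := spectrum.norm_le_norm_of_mem
    ((isHermitian_conjTranspose_mul_self A).eigenvalues_mem_spectrum_real i)
  rw [l2_opNorm_conjTranspose_mul_self, Real.norm_eq_abs] at hle
  exact Real.sqrt_le_left (norm_nonneg A) |>.mpr ((le_abs_self _).trans (by nlinarith))

lemma sval_one_le_l2_opNorm (A : Matrix n n ℝ) : sval 1 A ≤ ‖A‖ := by
  rw [sval, List.getD_eq_getElem?_getD]
  cases hx : (svalList A)[0]? with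
  | none => exact norm_nonneg A
  | some x =>
    obtain ⟨i, -, rfl⟩ := Multiset.mem_map.mp <| (Multiset.mem_sort _).mp <|
      List.mem_reverse.mp (List.mem_of_getElem? hx)
    exact sqrt_eigenvalues_conjTranspose_mul_self_le A i

lemma abs_apply_le_sqrt_one_sub_sq {M : Matrix n n ℝ} (hM : M ∈ unitary (Matrix n n ℝ))
    {i k : n} (hik : i ≠ k) (j : n) : |M i j| ≤ √(1 - M k j ^ 2) := by
  have hcols : Mᵀ * M = 1 := Unitary.star_mul_self_of_mem hM
  have hcol : ∑ l, M l j ^ 2 = 1 := by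
    simpa [mul_apply, sq] using congrFun (congrFun hcols j) j
  have hpair : ∑ l ∈ {i, k}, M l j ^ 2 ≤ 1 :=
    hcol ▸ Finset.sum_le_sum_of_subset_of_nonneg (Finset.subset_univ _) fun _ _ _ => sq_nonneg _
  rw [Finset.sum_pair hik] at hpair
  rw [← Real.sqrt_sq_eq_abs]
  exact Real.sqrt_le_sqrt (by linarith)

lemma diagonal_single_mul_mul_diagonal_single (M : Matrix n n ℝ) (i : n) (x y : ℝ) :
    diagonal (Pi.single i x) * M * diagonal (Pi.single i y) =
      diagonal (Pi.single i (x * M i i * y)) := by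
  ext j k
  by_cases hj : j = i <;> by_cases hk : k = i <;> simp_all [diagonal_apply, eq_comm]

lemma l2_opNorm_diagonal_mul_mul_diagonal_le {M : Matrix n n ℝ} (hM : ‖M‖ ≤ 1) (i₀ : n)
    {u v : n → ℝ} {a a' b b' s : ℝ} (ha' : 0 ≤ a') (hb' : 0 ≤ b')
    (hu₀ : |u i₀| ≤ a) (hu : ∀ i ≠ i₀, |u i| ≤ a') (hv₀ : |v i₀| ≤ b) (hv : ∀ i ≠ i₀, |v i| ≤ b')
    (hs : |M i₀ i₀| ≤ s) :
    ‖diagonal u * M * diagonal v‖ ≤ a * b * s + a * b' + a' * b + a' * b' := by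
  have hsplit (w : n → ℝ) : diagonal w = diagonal (Pi.single i₀ (w i₀)) +
      diagonal (Function.update w i₀ 0) := by
    rw [diagonal_add]
    congr 1
    ext i
    by_cases hi : i = i₀ <;> simp [hi]
  have hnorm_single (x : ℝ) : ‖diagonal (Pi.single i₀ x)‖ = |x| := by
    simp [Pi.norm_single]
  have hnorm_update {w : n → ℝ} {c : ℝ} (hc : 0 ≤ c) (hw : ∀ i ≠ i₀, |w i| ≤ c) :
      ‖diagonal (Function.update w i₀ 0)‖ ≤ c := by
    rw [l2_opNorm_diagonal, pi_norm_le_iff_of_nonneg hc]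
    intro i
    by_cases hi : i = i₀ <;> simp [hi, hc, hw]
  have ha : 0 ≤ a := (abs_nonneg _).trans hu₀
  have hb : 0 ≤ b := (abs_nonneg _).trans hv₀
  have hs₀ : 0 ≤ s := (abs_nonneg _).trans hs
  rw [hsplit u, hsplit v]
  grw [norm_add_mul_mul_add_le, diagonal_single_mul_mul_diagonal_single, hnorm_single, hnorm_single,
    hnorm_single, hnorm_update ha' hu, hnorm_update hb' hv, hM, abs_mul, abs_mul, hu₀, hv₀, hs]
  linarith

end

lemma abs_le_apply_one_of_antitone {d : ℕ} (hd : 1 < d) {D : Fin d → ℝ} (hD : Antitone D)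
    {i : Fin d} (hi : i ≠ ⟨0, by omega⟩) (hDi : 0 ≤ D i) : |D i| ≤ D ⟨1, hd⟩ := by
  rw [abs_of_nonneg hDi]
  exact hD (Fin.mk_le_of_le_val (Nat.one_le_iff_ne_zero.mpr fun h => hi (Fin.ext h)))

/-- Let `d ≥ 2` and `g, h ∈ SL(d, ℝ)` with singular value decompositions
`g = k_g D_g k_g'` and `h = k_h D_h k_h'`.  Then
`σ₁(gh)/(σ₁(g)σ₁(h)) ≤ σ₂(g)/σ₁(g) + σ₂(h)/σ₁(h) + (σ₂(g)/σ₁(g))(σ₂(h)/σ₁(h))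
  + √(1 − ⟨k_g' k_h e₁, e_d⟩²)`. -/
theorem sigma_one_mul_upper_bound
    (d : ℕ) (hd : 2 ≤ d)
    (g h : Matrix (Fin d) (Fin d) ℝ)
    (kg kg' kh kh' : Matrix (Fin d) (Fin d) ℝ)
    (hkg : kg * kgᵀ = 1) (hkg' : kg' * kg'ᵀ = 1)
    (hkh : kh * khᵀ = 1) (hkh' : kh' * kh'ᵀ = 1)
    (Dg Dh : Fin d → ℝ)
    (hDgpos : ∀ i, 0 < Dg i) (hDganti : ∀ i j : Fin d, i ≤ j → Dg j ≤ Dg i)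
    (hDhpos : ∀ i, 0 < Dh i) (hDhanti : ∀ i j : Fin d, i ≤ j → Dh j ≤ Dh i)
    (hgdec : g = kg * Matrix.diagonal Dg * kg')
    (hhdec : h = kh * Matrix.diagonal Dh * kh') :
    sval 1 (g * h) / (Dg ⟨0, by omega⟩ * Dh ⟨0, by omega⟩) ≤
      Dg ⟨1, by omega⟩ / Dg ⟨0, by omega⟩ + Dh ⟨1, by omega⟩ / Dh ⟨0, by omega⟩ +
        (Dg ⟨1, by omega⟩ / Dg ⟨0, by omega⟩) * (Dh ⟨1, by omega⟩ / Dh ⟨0, by omega⟩) +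
        Real.sqrt (1 - ((kg' * kh) ⟨d - 1, by omega⟩ ⟨0, by omega⟩) ^ 2) := by
  have : NeZero d := ⟨by omega⟩
  set i₀ : Fin d := ⟨0, by omega⟩
  set i₁ : Fin d := ⟨1, by omega⟩
  set M := kg' * kh
  have hM : M ∈ unitary (Matrix (Fin d) (Fin d) ℝ) :=
    mul_mem (mem_unitary_of_mul_transpose_eq_one hkg') (mem_unitary_of_mul_transpose_eq_one hkh)
  have hgh : g * h = kg * (diagonal Dg * M * diagonal Dh) * kh' := by
    simp only [hgdec, hhdec, M, Matrix.mul_assoc]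
  have hgh_norm : ‖g * h‖ = ‖diagonal Dg * M * diagonal Dh‖ := by
    rw [hgh, CStarRing.norm_mul_mem_unitary _ (mem_unitary_of_mul_transpose_eq_one hkh'),
      CStarRing.norm_mem_unitary_mul _ (mem_unitary_of_mul_transpose_eq_one hkg)]
  have hcorner : |M i₀ i₀| ≤ √(1 - M ⟨d - 1, by omega⟩ i₀ ^ 2) :=
    abs_apply_le_sqrt_one_sub_sq hM (by simp [i₀, Fin.ext_iff]; omega) i₀
  have hbound := l2_opNorm_diagonal_mul_mul_diagonal_le (CStarRing.norm_of_mem_unitary hM).le i₀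
    (hDgpos i₁).le (hDhpos i₁).le (abs_of_pos (hDgpos i₀)).le
    (fun i hi => abs_le_apply_one_of_antitone _ hDganti hi (hDgpos i).le)
    (abs_of_pos (hDhpos i₀)).le
    (fun i hi => abs_le_apply_one_of_antitone _ hDhanti hi (hDhpos i).le) hcorner
  have ha := hDgpos i₀
  have hb := hDhpos i₀
  rw [div_le_iff₀ (by positivity)]
  calc sval 1 (g * h) ≤ ‖g * h‖ := sval_one_le_l2_opNorm _
    _ ≤ _ := hgh_norm ▸ hbound
    _ = _ := by field_simp; ring
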